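/- arXiv:2304.03345 — 6 statements merged into one kernel-verified Lean document; each statement's English description precedes it below -/
import Mathlib

section
/- Let p be a prime with p ≠ 2 and p ≠ 3. In GL(3, ZMod p), the subgroup generated by the matrices ρ_v(x, y) and ρ_f(x, y) with x = 1/2 and y = 1/3 (the tetrahedron specialized to 𝔽_p; both matrices are invertible) is isomorphic to the alternating group alternatingGroup (Fin 4). -/
open Matrix

/-- Grothendieck's universal rotation `ρ_v` about a vertex, with `x = cos θ`, `y = cos γ`. -/
def rhoV {R : Type*} [CommRing R] (x y : R) : Matrix (Fin 3) (Fin 3) R :=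
  !![1, 1 - x, (1 - x) * (1 - y); 0, -1, -1 + y; 0, 1 + x, -1 + (1 + x) * (1 - y)]

/-- Grothendieck's universal rotation `ρ_f` about a face, with `x = cos θ`, `y = cos γ`. -/
def rhoF {R : Type*} [CommRing R] (x y : R) : Matrix (Fin 3) (Fin 3) R :=
  !![-1, -1 + x, 0; 2, 1 - 2 * x, 0; 0, 1 + x, 1]

namespace TetraAux

/-- The four "vertices" of the tetrahedron in our coordinates. -/
def tetraV (p : ℕ) : Fin 4 → Fin 3 → ZMod p :=
  ![![0, 0, 3], ![1, -2, 0], ![0, 2, -3], ![-1, 0, 0]]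

/-- The 3-cycle `(0 1 2)`. -/
def a4a : Equiv.Perm (Fin 4) := Equiv.swap 0 1 * Equiv.swap 1 2

/-- The 3-cycle `(1 2 3)`. -/
def a4b : Equiv.Perm (Fin 4) := Equiv.swap 1 2 * Equiv.swap 2 3

lemma mem12 : ∀ σ : Equiv.Perm (Fin 4), Equiv.Perm.sign σ = 1 →
    σ = 1 ∨ σ = a4a ∨ σ = a4b ∨ σ = a4a*a4a ∨ σ = a4a*a4b ∨ σ = a4b*a4a ∨ σ = a4b*a4b ∨
    σ = a4a*a4a*a4b ∨ σ = a4a*a4b*a4b ∨ σ = a4b*a4a*a4a ∨ σ = a4b*a4b*a4a ∨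
    σ = a4a*a4b*a4b*a4a := by decide

lemma closure_ab :
    Subgroup.closure ({a4a, a4b} : Set (Equiv.Perm (Fin 4))) = alternatingGroup (Fin 4) := by
  apply le_antisymm
  · rw [Subgroup.closure_le]
    rintro σ (rfl | rfl)
    · rw [SetLike.mem_coe, Equiv.Perm.mem_alternatingGroup]; decide
    · rw [SetLike.mem_coe, Equiv.Perm.mem_alternatingGroup]; decide
  · intro σ hσ
    have ha : a4a ∈ Subgroup.closure ({a4a, a4b} : Set (Equiv.Perm (Fin 4))) :=
      Subgroup.subset_closure (by simp)
    have hb : a4b ∈ Subgroup.closure ({a4a, a4b} : Set (Equiv.Perm (Fin 4))) :=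
      Subgroup.subset_closure (by simp)
    rw [Equiv.Perm.mem_alternatingGroup] at hσ
    rcases mem12 σ hσ with rfl|rfl|rfl|rfl|rfl|rfl|rfl|rfl|rfl|rfl|rfl|rfl
    · exact Subgroup.one_mem _
    · exact ha
    · exact hb
    · exact Subgroup.mul_mem _ ha ha
    · exact Subgroup.mul_mem _ ha hb
    · exact Subgroup.mul_mem _ hb ha
    · exact Subgroup.mul_mem _ hb hb
    · exact Subgroup.mul_mem _ (Subgroup.mul_mem _ ha ha) hb
    · exact Subgroup.mul_mem _ (Subgroup.mul_mem _ ha hb) hb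
    · exact Subgroup.mul_mem _ (Subgroup.mul_mem _ hb ha) ha
    · exact Subgroup.mul_mem _ (Subgroup.mul_mem _ hb hb) ha
    · exact Subgroup.mul_mem _ (Subgroup.mul_mem _ (Subgroup.mul_mem _ ha hb) hb) ha

variable (p : ℕ) [Fact p.Prime]

lemma vA (h2 : (2 : ZMod p) ≠ 0) (h3 : (3 : ZMod p) ≠ 0) :
    ∀ i, (rhoV (1/2 : ZMod p) (1/3)).mulVec (tetraV p i) = tetraV p (a4a i) := by
  have e0 : (rhoV (1/2 : ZMod p) (1/3)).mulVec (tetraV p 0) = tetraV p 1 := by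
    funext j; fin_cases j <;>
      simp [tetraV, rhoV, Matrix.mulVec, dotProduct, Fin.sum_univ_three] <;>
      field_simp <;> first | ring1 | (left; ring1) | simp
  have e1 : (rhoV (1/2 : ZMod p) (1/3)).mulVec (tetraV p 1) = tetraV p 2 := by
    funext j; fin_cases j <;>
      simp [tetraV, rhoV, Matrix.mulVec, dotProduct, Fin.sum_univ_three] <;>
      field_simp <;> first | ring1 | (left; ring1) | simp
  have e2 : (rhoV (1/2 : ZMod p) (1/3)).mulVec (tetraV p 2) = tetraV p 0 := by
    funext j; fin_cases j <;>
      simp [tetraV, rhoV, Matrix.mulVec, dotProduct, Fin.sum_univ_three] <;>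
      field_simp <;> first | ring1 | (left; ring1) | simp
  have e3 : (rhoV (1/2 : ZMod p) (1/3)).mulVec (tetraV p 3) = tetraV p 3 := by
    funext j; fin_cases j <;>
      simp [tetraV, rhoV, Matrix.mulVec, dotProduct, Fin.sum_univ_three] <;>
      field_simp <;> first | ring1 | (left; ring1) | simp
  intro i
  fin_cases i
  · exact e0
  · exact e1
  · exact e2
  · exact e3

lemma vB (h2 : (2 : ZMod p) ≠ 0) (h3 : (3 : ZMod p) ≠ 0) :
    ∀ i, (rhoF (1/2 : ZMod p) (1/3)).mulVec (tetraV p i) = tetraV p (a4b i) := by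
  have e0 : (rhoF (1/2 : ZMod p) (1/3)).mulVec (tetraV p 0) = tetraV p 0 := by
    funext j; fin_cases j <;>
      simp [tetraV, rhoF, Matrix.mulVec, dotProduct, Fin.sum_univ_three] <;>
      field_simp <;> first | ring1 | (left; ring1) | simp
  have e1 : (rhoF (1/2 : ZMod p) (1/3)).mulVec (tetraV p 1) = tetraV p 2 := by
    funext j; fin_cases j <;>
      simp [tetraV, rhoF, Matrix.mulVec, dotProduct, Fin.sum_univ_three] <;>
      field_simp <;> first | ring1 | (left; ring1) | simp
  have e2 : (rhoF (1/2 : ZMod p) (1/3)).mulVec (tetraV p 2) = tetraV p 3 := by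
    funext j; fin_cases j <;>
      simp [tetraV, rhoF, Matrix.mulVec, dotProduct, Fin.sum_univ_three] <;>
      field_simp <;> first | ring1 | (left; ring1) | simp
  have e3 : (rhoF (1/2 : ZMod p) (1/3)).mulVec (tetraV p 3) = tetraV p 1 := by
    funext j; fin_cases j <;>
      simp [tetraV, rhoF, Matrix.mulVec, dotProduct, Fin.sum_univ_three] <;>
      field_simp <;> first | ring1 | (left; ring1) | simp
  intro i
  fin_cases i
  · exact e0
  · exact e1
  · exact e2
  · exact e3

/-- The subgroup of pairs (matrix, permutation) compatible with the vertex action. -/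
def tetraK : Subgroup (GL (Fin 3) (ZMod p) × Equiv.Perm (Fin 4)) where
  carrier := {gs | ∀ i,
    Matrix.mulVec (gs.1 : Matrix (Fin 3) (Fin 3) (ZMod p)) (tetraV p i) = tetraV p (gs.2 i)}
  one_mem' := by
    intro i
    show Matrix.mulVec ((1 : GL (Fin 3) (ZMod p)) : Matrix (Fin 3) (Fin 3) (ZMod p)) _ = _
    rw [Units.val_one, Matrix.one_mulVec]
    rfl
  mul_mem' := by
    intro x y hx hy i
    show Matrix.mulVec ((x.1 * y.1 : GL (Fin 3) (ZMod p)) : Matrix (Fin 3) (Fin 3) (ZMod p)) _ = _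
    rw [Units.val_mul, ← Matrix.mulVec_mulVec, hy i, hx (y.2 i)]
    rfl
  inv_mem' := by
    intro x hx i
    have h1 := hx (x.2⁻¹ i)
    rw [← Equiv.Perm.mul_apply, mul_inv_cancel, Equiv.Perm.one_apply] at h1
    show Matrix.mulVec ((x.1⁻¹ : GL (Fin 3) (ZMod p)) : Matrix (Fin 3) (Fin 3) (ZMod p)) _ = _
    rw [← h1, Matrix.mulVec_mulVec, Units.inv_mul, Matrix.one_mulVec]
    rfl

lemma tetraV_inj (h2 : (2 : ZMod p) ≠ 0) (h3 : (3 : ZMod p) ≠ 0) :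
    Function.Injective (tetraV p) := by
  intro i j hij
  have c0 := congrFun hij 0
  have c1 := congrFun hij 1
  have c2 := congrFun hij 2
  fin_cases i <;> fin_cases j <;> simp [tetraV] at c0 c1 c2 ⊢ <;>
    first
      | rfl
      | exact absurd c0 (by intro h; exact h2 (by linear_combination h))
      | exact absurd c0 (by intro h; exact h2 (by linear_combination -h))
      | exact absurd c1 (by intro h; exact h2 (by linear_combination h))
      | exact absurd c1 (by intro h; exact h2 (by linear_combination -h))
      | exact absurd c2 (by intro h; exact h3 (by linear_combination h))
      | exact absurd c2 (by intro h; exact h3 (by linear_combination -h))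
      | exact absurd c2 (by intro h; exact h3 (by linear_combination h/2))
      | exact absurd c2 (by intro h; exact h3 (by linear_combination -h/2))

lemma matrix_eq_of_mulVec (h2 : (2 : ZMod p) ≠ 0) (h3 : (3 : ZMod p) ≠ 0)
    (g g' : Matrix (Fin 3) (Fin 3) (ZMod p))
    (H : ∀ j : Fin 4, g.mulVec (tetraV p j) = g'.mulVec (tetraV p j)) : g = g' := by
  ext i j
  have e0 := congrFun (H 0) i
  have e1 := congrFun (H 1) i
  have e3 := congrFun (H 3) i
  simp [tetraV, Matrix.mulVec, dotProduct, Fin.sum_univ_three] at e0 e1 e3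
  have c0 : g i 0 = g' i 0 := e3
  have c2 : g i 2 = g' i 2 := e0.resolve_right h3
  have c1 : g i 1 = g' i 1 := by
    have h : g i 1 * 2 = g' i 1 * 2 := by linear_combination -e1 + c0
    exact mul_right_cancel₀ h2 h
  fin_cases j
  · exact c0
  · exact c1
  · exact c2

end TetraAux

open TetraAux

/-- The tetrahedron (`cos θ = 1/2`, `cos γ = 1/3`) specialized to `𝔽_p` for `p ≠ 2, 3` still
has automorphism group `A₄`. -/
theorem tetrahedron_mod_p (p : ℕ) [Fact p.Prime] (hp2 : p ≠ 2) (hp3 : p ≠ 3)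
    (A B : GL (Fin 3) (ZMod p))
    (hA : (A : Matrix (Fin 3) (Fin 3) (ZMod p)) = rhoV (1 / 2) (1 / 3))
    (hB : (B : Matrix (Fin 3) (Fin 3) (ZMod p)) = rhoF (1 / 2) (1 / 3)) :
    Nonempty (Subgroup.closure {A, B} ≃* alternatingGroup (Fin 4)) := by
  have hp : p.Prime := Fact.out
  have h2 : (2 : ZMod p) ≠ 0 := by
    intro h
    have h' : ((2 : ℕ) : ZMod p) = 0 := by exact_mod_cast h
    have : p ∣ 2 := (ZMod.natCast_eq_zero_iff 2 p).mp h'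
    exact hp2 ((Nat.prime_dvd_prime_iff_eq hp Nat.prime_two).mp this)
  have h3 : (3 : ZMod p) ≠ 0 := by
    intro h
    have h' : ((3 : ℕ) : ZMod p) = 0 := by exact_mod_cast h
    have : p ∣ 3 := (ZMod.natCast_eq_zero_iff 3 p).mp h'
    exact hp3 ((Nat.prime_dvd_prime_iff_eq hp Nat.prime_three).mp this)
  -- membership of the two generators in the compatibility subgroup
  have hAK : (A, a4a) ∈ tetraK p := by
    intro i
    show Matrix.mulVec (A : Matrix (Fin 3) (Fin 3) (ZMod p)) _ = _
    rw [hA]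
    exact vA p h2 h3 i
  have hBK : (B, a4b) ∈ tetraK p := by
    intro i
    show Matrix.mulVec (B : Matrix (Fin 3) (Fin 3) (ZMod p)) _ = _
    rw [hB]
    exact vB p h2 h3 i
  set K' : Subgroup (GL (Fin 3) (ZMod p) × Equiv.Perm (Fin 4)) :=
    Subgroup.closure {(A, a4a), (B, a4b)} with hK'
  have hK'le : K' ≤ tetraK p := by
    rw [hK', Subgroup.closure_le]
    rintro x (rfl | rfl)
    · exact hAK
    · exact hBK
  -- the two projections restricted to K'
  set f1 : K' →* GL (Fin 3) (ZMod p) :=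
    (MonoidHom.fst _ _).comp K'.subtype with hf1
  set f2 : K' →* Equiv.Perm (Fin 4) :=
    (MonoidHom.snd _ _).comp K'.subtype with hf2
  have hf1inj : Function.Injective f1 := by
    intro x y h
    have hx := hK'le x.2
    have hy := hK'le y.2
    have hmat : (x : GL (Fin 3) (ZMod p) × Equiv.Perm (Fin 4)).1 =
        (y : GL (Fin 3) (ZMod p) × Equiv.Perm (Fin 4)).1 := h
    apply Subtype.ext
    apply Prod.ext hmat
    apply Equiv.ext
    intro i
    apply tetraV_inj p h2 h3
    rw [← hx i, ← hy i, hmat]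
  have hf2inj : Function.Injective f2 := by
    intro x y h
    have hx := hK'le x.2
    have hy := hK'le y.2
    have hperm : (x : GL (Fin 3) (ZMod p) × Equiv.Perm (Fin 4)).2 =
        (y : GL (Fin 3) (ZMod p) × Equiv.Perm (Fin 4)).2 := h
    apply Subtype.ext
    refine Prod.ext ?_ hperm
    apply Units.ext
    apply matrix_eq_of_mulVec p h2 h3
    intro j
    rw [hx j, hy j, hperm]
  have hrange1 : f1.range = Subgroup.closure {A, B} := by
    have hmap : f1.range = Subgroup.map (MonoidHom.fst _ _) K' := by
      ext g
      constructor
      · rintro ⟨⟨x, hx⟩, rfl⟩; exact ⟨x, hx, rfl⟩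
      · rintro ⟨x, hx, rfl⟩; exact ⟨⟨x, hx⟩, rfl⟩
    rw [hmap, hK', MonoidHom.map_closure]
    congr 1
    simp [Set.image_insert_eq]
  have hrange2 : f2.range = alternatingGroup (Fin 4) := by
    have hmap : f2.range = Subgroup.map (MonoidHom.snd _ _) K' := by
      ext g
      constructor
      · rintro ⟨⟨x, hx⟩, rfl⟩; exact ⟨x, hx, rfl⟩
      · rintro ⟨x, hx, rfl⟩; exact ⟨⟨x, hx⟩, rfl⟩
    rw [hmap, hK', MonoidHom.map_closure, ← closure_ab]
    congr 1
    simp [Set.image_insert_eq]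
  exact ⟨((MulEquiv.subgroupCongr hrange1).symm.trans
      (MonoidHom.ofInjective hf1inj).symm).trans
      ((MonoidHom.ofInjective hf2inj).trans (MulEquiv.subgroupCongr hrange2))⟩
end

section
/- Let p be an odd prime. In GL(3, ZMod p), the subgroup generated by the matrices ρ_v(0, 0) and ρ_f(0, 0) (the cube specialized to 𝔽_p; both matrices are invertible) is isomorphic to the symmetric group Equiv.Perm (Fin 4). -/
/-!
The cube's rotation group is `S₄`, acting on the four body diagonals; as a representation this
is the standard representation of `S₄` twisted by the sign, which is defined over `ℤ` on the
sum-zero sublattice of `ℤ⁴`. Conjugating it by an integer matrix of determinant `2` gives an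
integral representation in which a `3`-cycle and a `4`-cycle act by `ρ_v(0,0)` and `ρ_f(0,0)`.
These two permutations generate `S₄`, so reducing mod `p` maps `S₄` onto the subgroup generated
by `ρ_v(0,0)` and `ρ_f(0,0)`. The map is injective because for `σ ≠ 1` some entry of
`ρ(σ) - 1` is `±1` or `±2`, which does not vanish mod an odd prime.
-/

open Matrix

lemma mapMatrix_rhoV {R S : Type*} [CommRing R] [CommRing S] (f : R →+* S) (x y : R) :
    f.mapMatrix (rhoV x y) = rhoV (f x) (f y) := by
  ext i j
  fin_cases i <;> fin_cases j <;> simp [rhoV]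

lemma mapMatrix_rhoF {R S : Type*} [CommRing R] [CommRing S] (f : R →+* S) (x y : R) :
    f.mapMatrix (rhoF x y) = rhoF (f x) (f y) := by
  ext i j
  fin_cases i <;> fin_cases j <;> simp [rhoF, map_ofNat]

lemma mapMatrix_intCast_ne_one_of_natAbs_dvd_two {n : Type*} [Fintype n] [DecidableEq n]
    {p : ℕ} [Fact p.Prime] (hp2 : p ≠ 2) {M : Matrix n n ℤ} {i j : n}
    (h : ((M - 1) i j).natAbs ∣ 2) : (Int.castRingHom (ZMod p)).mapMatrix M ≠ 1 := by
  intro hM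
  have hsub : (Int.castRingHom (ZMod p)).mapMatrix (M - 1) = 0 := by
    rw [map_sub, hM, map_one, sub_self]
  have hdvd : (((M - 1) i j : ℤ) : ZMod p) = 0 := congrFun (congrFun hsub i) j
  rw [ZMod.intCast_zmod_eq_zero_iff_dvd, Int.natCast_dvd] at hdvd
  exact hp2 ((Nat.prime_dvd_prime_iff_eq Fact.out Nat.prime_two).mp (hdvd.trans h))

namespace CubeRotation

open Equiv

def sumZeroBasis : Matrix (Fin 4) (Fin 3) ℤ :=
  of fun a k => (if a = k.castSucc then 1 else 0) - if a = 3 then 1 else 0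

def sumZeroCoords : Matrix (Fin 3) (Fin 4) ℤ :=
  of fun k a => if a = k.castSucc then 1 else 0

lemma sumZeroCoords_mul_sumZeroBasis : sumZeroCoords * sumZeroBasis = 1 := by decide

lemma sumZeroBasis_mul_sumZeroCoords :
    sumZeroBasis * sumZeroCoords = 1 - vecMulVec (Pi.single 3 1) 1 := by decide

lemma one_vecMul_sumZeroBasis : 1 ᵥ* sumZeroBasis = 0 := by decide

/-- Mathlib's `σ⁻¹.permMatrix` is the matrix of `e a ↦ e (σ a)`. -/
def stdRepMatrix (σ : Perm (Fin 4)) : Matrix (Fin 3) (Fin 3) ℤ :=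
  sumZeroCoords * σ⁻¹.permMatrix ℤ * sumZeroBasis

/-- The sum-zero sublattice spanned by `sumZeroBasis` is invariant, since permutation matrices
preserve the sum of the coordinates. -/
lemma sumZeroBasis_mul_stdRepMatrix (σ : Perm (Fin 4)) :
    sumZeroBasis * stdRepMatrix σ = σ⁻¹.permMatrix ℤ * sumZeroBasis := by
  rw [stdRepMatrix, ← Matrix.mul_assoc, ← Matrix.mul_assoc, sumZeroBasis_mul_sumZeroCoords,
    Matrix.sub_mul, Matrix.sub_mul, Matrix.one_mul, vecMulVec_mul, vecMulVec_mul,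
    vecMul_permMatrix, Pi.one_comp, one_vecMul_sumZeroBasis, sub_eq_self]
  ext
  simp [vecMulVec_apply]

def stdRep : Perm (Fin 4) →* Matrix (Fin 3) (Fin 3) ℤ where
  toFun := stdRepMatrix
  map_one' := by
    rw [stdRepMatrix, inv_one, permMatrix_one, Matrix.mul_one, sumZeroCoords_mul_sumZeroBasis]
  map_mul' σ τ := by
    show stdRepMatrix (σ * τ) = stdRepMatrix σ * stdRepMatrix τ
    conv_rhs => rw [stdRepMatrix, Matrix.mul_assoc, sumZeroBasis_mul_stdRepMatrix]
    rw [stdRepMatrix, _root_.mul_inv_rev, permMatrix_mul]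
    simp only [Matrix.mul_assoc]

def rotationRep : Perm (Fin 4) →* Matrix (Fin 3) (Fin 3) ℤ where
  toFun σ := Perm.sign σ • stdRep σ
  map_one' := by simp
  map_mul' σ τ := by simp [smul_mul_smul_comm, mul_smul]

def cubeBasisChange : Matrix (Fin 3) (Fin 3) ℤ := !![1, 1, 0; 0, -1, 1; -1, -1, -2]

def cubeBasisChangeAdj : Matrix (Fin 3) (Fin 3) ℤ := !![3, 2, 1; -1, -2, -1; -1, 0, -1]

lemma cubeBasisChange_mul_cubeBasisChangeAdj : cubeBasisChange * cubeBasisChangeAdj = 2 := by decide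

/-- `rotationRep σ` conjugated by `cubeBasisChange`, whose inverse is `cubeBasisChangeAdj / 2`;
the division by `2` is exact, as `cubeBasisChange_mul_rotationRep` shows. -/
def cubeRotationMatrix (σ : Perm (Fin 4)) : Matrix (Fin 3) (Fin 3) ℤ :=
  of fun i j => (cubeBasisChange * rotationRep σ * cubeBasisChangeAdj) i j / 2

lemma cubeBasisChange_mul_rotationRep :
    ∀ σ, cubeBasisChange * rotationRep σ = cubeRotationMatrix σ * cubeBasisChange := by
  decide

lemma mul_cubeBasisChange_injective : Function.Injective (· * cubeBasisChange) := by
  intro X Y h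
  have h2 := congrArg (· * cubeBasisChangeAdj) h
  simp only [Matrix.mul_assoc, cubeBasisChange_mul_cubeBasisChangeAdj, mul_two,
    ← two_smul ℤ] at h2
  exact smul_right_injective _ two_ne_zero h2

def cubeRotation : Perm (Fin 4) →* GL (Fin 3) ℤ := MonoidHom.toHomUnits
  { toFun := cubeRotationMatrix
    map_one' := mul_cubeBasisChange_injective <| by
      simp only [← cubeBasisChange_mul_rotationRep, map_one, Matrix.mul_one, Matrix.one_mul]
    map_mul' σ τ := mul_cubeBasisChange_injective <| by
      simp only [← cubeBasisChange_mul_rotationRep, map_mul, ← Matrix.mul_assoc]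
      rw [cubeBasisChange_mul_rotationRep, Matrix.mul_assoc, cubeBasisChange_mul_rotationRep,
        Matrix.mul_assoc] }

lemma exists_natAbs_cubeRotationMatrix_sub_one_dvd_two :
    ∀ σ ≠ 1, ∃ i j, ((cubeRotationMatrix σ - 1) i j).natAbs ∣ 2 := by
  decide

lemma injective_mapGL_comp_cubeRotation {p : ℕ} [Fact p.Prime] (hp2 : p ≠ 2) :
    Function.Injective
      ((GeneralLinearGroup.map (Int.castRingHom (ZMod p))).comp cubeRotation) := by
  rw [injective_iff_map_eq_one]
  intro σ hσ
  by_contra hne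
  obtain ⟨i, j, h⟩ := exists_natAbs_cubeRotationMatrix_sub_one_dvd_two σ hne
  exact mapMatrix_intCast_ne_one_of_natAbs_dvd_two hp2 h (congrArg Units.val hσ)

/-- The permutations of the four body diagonals of the cube induced by `ρ_v(0,0)` and
`ρ_f(0,0)`. -/
def vertexPerm : Perm (Fin 4) := c[1, 2, 3]

def facePerm : Perm (Fin 4) := c[0, 1, 3, 2]

lemma cubeRotationMatrix_vertexPerm : cubeRotationMatrix vertexPerm = rhoV 0 0 := by decide

lemma cubeRotationMatrix_facePerm : cubeRotationMatrix facePerm = rhoF 0 0 := by decide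

lemma isCycle_facePerm : facePerm.IsCycle := List.isCycle_formPerm (by decide) (by decide)

lemma closure_vertexPerm_facePerm : Subgroup.closure {vertexPerm, facePerm} = ⊤ := by
  have hswap : swap 0 (facePerm 0) = facePerm * vertexPerm := by decide
  rw [eq_top_iff, ← Perm.closure_cycle_adjacent_swap isCycle_facePerm (by decide) 0,
    Subgroup.closure_le, Set.insert_subset_iff, Set.singleton_subset_iff, hswap]
  exact ⟨Subgroup.subset_closure (by simp), mul_mem (Subgroup.subset_closure (by simp))
    (Subgroup.subset_closure (by simp))⟩

end CubeRotation

open CubeRotation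

/-- The cube (`cos θ = 0`, `cos γ = 0`) specialized to `𝔽_p` for an odd prime `p` still
has automorphism group `S₄`. -/
theorem cube_mod_odd_p (p : ℕ) [Fact p.Prime] (hp2 : p ≠ 2)
    (A B : GL (Fin 3) (ZMod p))
    (hA : (A : Matrix (Fin 3) (Fin 3) (ZMod p)) = rhoV 0 0)
    (hB : (B : Matrix (Fin 3) (Fin 3) (ZMod p)) = rhoF 0 0) :
    Nonempty (Subgroup.closure {A, B} ≃* Equiv.Perm (Fin 4)) := by
  set ρ := (GeneralLinearGroup.map (Int.castRingHom (ZMod p))).comp cubeRotation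
  have hρA : ρ vertexPerm = A := Units.ext <| by
    show (Int.castRingHom (ZMod p)).mapMatrix (cubeRotationMatrix vertexPerm) = _
    rw [hA, cubeRotationMatrix_vertexPerm, mapMatrix_rhoV, map_zero]
  have hρB : ρ facePerm = B := Units.ext <| by
    show (Int.castRingHom (ZMod p)).mapMatrix (cubeRotationMatrix facePerm) = _
    rw [hB, cubeRotationMatrix_facePerm, mapMatrix_rhoF, map_zero]
  have hrange : Subgroup.closure {A, B} = (⊤ : Subgroup (Equiv.Perm (Fin 4))).map ρ := by
    rw [← closure_vertexPerm_facePerm, MonoidHom.map_closure, Set.image_pair, hρA, hρB]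
  exact ⟨(MulEquiv.subgroupCongr hrange).trans
    ((Subgroup.equivMapOfInjective ⊤ ρ (injective_mapGL_comp_cubeRotation hp2)).symm.trans
      Subgroup.topEquiv)⟩
end

section
/- In GL(3, ZMod 2), the subgroup generated by the matrices ρ_v(0, 0) and ρ_f(0, 0) (the cube specialized to 𝔽₂; both matrices are invertible) is isomorphic to the symmetric group Equiv.Perm (Fin 3). -/
/-!
Over `𝔽₂` the vectors `(1,1,0)`, `(0,1,1)`, `(0,0,1)` form a basis of `𝔽₂³` which `ρ_v(0,0)`
permutes cyclically and in which `ρ_f(0,0)` swaps the first two vectors. So both matrices lie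
in the image of the permutation representation of `S₃`, written in this basis, as the images of
a 3-cycle and a transposition of adjacent points. That representation is faithful, and the two
permutations generate `S₃`, so the group generated by the matrices is a copy of `S₃`.
-/

open Matrix

open Equiv

theorem Matrix.permMatrixHom_injective {n R : Type*} [DecidableEq n] [Fintype n]
    [NonAssocSemiring R] [Nontrivial R] :
    Function.Injective (permMatrixHom (n := n) (R := R)) := fun _ _ h =>
  inv_injective <| Equiv.ext fun x => Option.some_injective _ <| by
    simpa using congrArg (· x) (PEquiv.toMatrix_injective h)

theorem Equiv.Perm.closure_finRotate_swap_zero_one (n : ℕ) :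
    Subgroup.closure {finRotate (n + 2), swap 0 1} = ⊤ := by
  simpa [finRotate_apply] using
    Perm.closure_cycle_adjacent_swap isCycle_finRotate support_finRotate 0

section ConjPermMatrixHom

variable {n R : Type*} [DecidableEq n] [Fintype n] [CommRing R]

/-- `σ` sends the `j`-th column of `P` to its `σ j`-th column. -/
def conjPermMatrixHom (P : GL n R) : Perm n →* GL n R :=
  (MulAut.conj P).toMonoidHom.comp (permMatrixHom (n := n) (R := R)).toHomUnits

theorem coe_conjPermMatrixHom_apply (P : GL n R) (σ : Perm n) :
    (conjPermMatrixHom P σ : Matrix n n R) = P * σ⁻¹.permMatrix R * P⁻¹ :=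
  rfl

theorem conjPermMatrixHom_injective [Nontrivial R] (P : GL n R) :
    Function.Injective (conjPermMatrixHom P) :=
  (MulAut.conj P).injective.comp fun _ _ h => permMatrixHom_injective (congrArg Units.val h)

end ConjPermMatrixHom

def cubeModTwoBasis : GL (Fin 3) (ZMod 2) :=
  ⟨!![1, 0, 0; 1, 1, 0; 0, 1, 1], !![1, 0, 0; 1, 1, 0; 1, 1, 1], by decide, by decide⟩

theorem conjPermMatrixHom_cubeModTwoBasis_finRotate :
    (conjPermMatrixHom cubeModTwoBasis (finRotate 3) : Matrix (Fin 3) (Fin 3) (ZMod 2)) =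
      rhoV 0 0 := by
  rw [coe_conjPermMatrixHom_apply]
  decide

theorem conjPermMatrixHom_cubeModTwoBasis_swap :
    (conjPermMatrixHom cubeModTwoBasis (swap 0 1) : Matrix (Fin 3) (Fin 3) (ZMod 2)) =
      rhoF 0 0 := by
  rw [coe_conjPermMatrixHom_apply]
  decide

/-- The cube (`cos θ = 0`, `cos γ = 0`) specialized to `𝔽₂` degenerates: its automorphism
group becomes `S₃`. -/
theorem cube_mod_two
    (A B : GL (Fin 3) (ZMod 2))
    (hA : (A : Matrix (Fin 3) (Fin 3) (ZMod 2)) = rhoV 0 0)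
    (hB : (B : Matrix (Fin 3) (Fin 3) (ZMod 2)) = rhoF 0 0) :
    Nonempty (Subgroup.closure {A, B} ≃* Equiv.Perm (Fin 3)) := by
  set ρ := conjPermMatrixHom cubeModTwoBasis
  have hρA : ρ (finRotate 3) = A :=
    Units.ext (conjPermMatrixHom_cubeModTwoBasis_finRotate.trans hA.symm)
  have hρB : ρ (swap 0 1) = B :=
    Units.ext (conjPermMatrixHom_cubeModTwoBasis_swap.trans hB.symm)
  have hrange : ρ.range = Subgroup.closure {A, B} := by
    rw [MonoidHom.range_eq_map, ← Perm.closure_finRotate_swap_zero_one 1, MonoidHom.map_closure,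
      Set.image_pair, hρA, hρB]
  exact ⟨(MulEquiv.subgroupCongr hrange.symm).trans
    (MonoidHom.ofInjective (conjPermMatrixHom_injective cubeModTwoBasis)).symm⟩
end

section
/- Let p be a prime with p ≠ 2 and p ≠ 3. In GL(3, ZMod p), the subgroup generated by the matrices ρ_v(x, y) and ρ_f(x, y) with x = 1/2 and y = −1/3 (the octahedron specialized to 𝔽_p; both matrices are invertible) is isomorphic to the symmetric group Equiv.Perm (Fin 4). -/
open Matrix

namespace OctaAux

open Equiv Equiv.Perm Subgroup Finset

/-- the 4-cycle (0 1 2 3) -/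
def aP : Equiv.Perm (Fin 4) := ⟨fun i => ![1,2,3,0] i, fun i => ![3,0,1,2] i, by decide, by decide⟩
/-- the 3-cycle (1 3 2) -/
def bP : Equiv.Perm (Fin 4) := ⟨fun i => ![0,3,1,2] i, fun i => ![0,2,3,1] i, by decide, by decide⟩

lemma fix_four : ∀ σ : Equiv.Perm (Fin 4),
    (Finset.univ.filter fun i => σ i = i).card = 4 → σ = 1 := by decide

lemma fix_ne_three : ∀ σ : Equiv.Perm (Fin 4),
    (Finset.univ.filter fun i => σ i = i).card ≠ 3 := by decide

variable (p : ℕ) [Fact p.Prime]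

/-- permutation matrix : column `j` is `e_{σ j}` -/
def Pm (σ : Equiv.Perm (Fin 4)) : Matrix (Fin 4) (Fin 4) (ZMod p) :=
  Matrix.of fun i j => if σ j = i then 1 else 0

/-- the sign of `σ` as an element of `ZMod p` -/
def sgn (σ : Equiv.Perm (Fin 4)) : ZMod p := ((Equiv.Perm.sign σ : ℤ) : ZMod p)

/-- signed permutation matrix -/
def Qm (σ : Equiv.Perm (Fin 4)) : Matrix (Fin 4) (Fin 4) (ZMod p) := sgn p σ • Pm p σ

/-- base change matrix -/
def V : Matrix (Fin 4) (Fin 4) (ZMod p) := !![1,-3,-3,-3; 1,3,0,1; 1,-3,0,1; 1,3,3,1]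

/-- 12 times the inverse of `V` -/
def Wm : Matrix (Fin 4) (Fin 4) (ZMod p) := !![3,3,3,3; 0,2,-2,0; 0,-4,0,4; -3,3,3,-3]

/-- inverse of V -/
def V' : Matrix (Fin 4) (Fin 4) (ZMod p) := (12 : ZMod p)⁻¹ • Wm p

/-- conjugated signed permutation matrix -/
def Cm (σ : Equiv.Perm (Fin 4)) : Matrix (Fin 4) (Fin 4) (ZMod p) := V' p * Qm p σ * V p

/-- the 3×3 block -/
def mS (σ : Equiv.Perm (Fin 4)) : Matrix (Fin 3) (Fin 3) (ZMod p) :=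
  (Cm p σ).submatrix Fin.succ Fin.succ

lemma Pm_mul (σ τ : Equiv.Perm (Fin 4)) : Pm p (σ * τ) = Pm p σ * Pm p τ := by
  ext i j
  rw [Matrix.mul_apply]
  simp only [Pm, Matrix.of_apply, Equiv.Perm.mul_apply]
  rw [Finset.sum_eq_single (τ j)]
  · simp
    exact if_congr Iff.rfl rfl rfl
  · intro k _ hk
    exact mul_eq_zero_of_right _ (if_neg fun h => hk h.symm)
  · intro h
    exact absurd (Finset.mem_univ _) h

lemma Qm_mul (σ τ : Equiv.Perm (Fin 4)) : Qm p (σ * τ) = Qm p σ * Qm p τ := by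
  rw [Qm, Qm, Qm, Pm_mul, smul_mul_smul_comm]
  congr 1
  rw [sgn, sgn, sgn, _root_.map_mul]
  push_cast
  ring

lemma Pm_one : Pm p 1 = 1 := by
  ext i j
  simp [Pm, Matrix.one_apply, eq_comm]

lemma Qm_one : Qm p 1 = 1 := by
  rw [Qm, Pm_one, sgn, _root_.map_one]
  simp

lemma Qm_rowsum (σ : Equiv.Perm (Fin 4)) (j : Fin 4) : ∑ k, Qm p σ j k = sgn p σ := by
  simp only [Qm, Pm, Matrix.smul_apply, Matrix.of_apply, smul_eq_mul]
  rw [← Finset.mul_sum]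
  rw [Finset.sum_eq_single (σ⁻¹ j)]
  · simp
  · intro k _ hk
    rw [if_neg (fun h => hk (by rw [← h]; simp))]
  · intro h
    exact absurd (Finset.mem_univ _) h

lemma Qm_colsum (σ : Equiv.Perm (Fin 4)) (k : Fin 4) : ∑ j, Qm p σ j k = sgn p σ := by
  simp only [Qm, Pm, Matrix.smul_apply, Matrix.of_apply, smul_eq_mul]
  rw [← Finset.mul_sum, Finset.sum_ite_eq Finset.univ (σ k) (fun _ => (1 : ZMod p))]
  simp

variable {p}

section withp
variable [Fact p.Prime] (h12 : (12 : ZMod p) ≠ 0)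
include h12

lemma V'_rowsum (i : Fin 4) : ∑ j, V' p i j = if i = 0 then 1 else 0 := by
  fin_cases i <;>
    simp only [V', Wm, Fin.sum_univ_four, Matrix.smul_apply, smul_eq_mul] <;>
    norm_num [Matrix.vecHead, Matrix.vecTail, Fin.ext_iff, Matrix.cons_val_two, Matrix.cons_val_three]
  field_simp
  norm_num

lemma V_colsum (j : Fin 4) : ∑ l, V p l j = if j = 0 then (4 : ZMod p) else 0 := by
  fin_cases j <;>
    simp only [V, Fin.sum_univ_four] <;>
    norm_num [Matrix.vecHead, Matrix.vecTail, Fin.ext_iff, Matrix.cons_val_two, Matrix.cons_val_three]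

lemma Cm_col (σ : Equiv.Perm (Fin 4)) (i : Fin 4) :
    Cm p σ i 0 = sgn p σ * (if i = 0 then 1 else 0) := by
  have hV0 : ∀ k, V p k 0 = 1 := by
    intro k; fin_cases k <;> simp [V, Matrix.vecHead, Matrix.vecTail]
  calc Cm p σ i 0 = ∑ k, (∑ j, V' p i j * Qm p σ j k) * V p k 0 := by
        simp [Cm, Matrix.mul_apply]
    _ = ∑ k, ∑ j, V' p i j * Qm p σ j k := by
        simp only [hV0, mul_one]
    _ = ∑ j, ∑ k, V' p i j * Qm p σ j k := Finset.sum_comm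
    _ = ∑ j, V' p i j * ∑ k, Qm p σ j k := by
        simp [Finset.mul_sum]
    _ = sgn p σ * (if i = 0 then 1 else 0) := by
        simp only [Qm_rowsum]
        rw [← Finset.sum_mul, V'_rowsum h12, mul_comm]

lemma Cm_row (σ : Equiv.Perm (Fin 4)) (j : Fin 4) :
    Cm p σ 0 j = sgn p σ * (if j = 0 then 1 else 0) := by
  have hV'0 : ∀ k, V' p 0 k = (12 : ZMod p)⁻¹ * 3 := by
    intro k; fin_cases k <;> simp [V', Wm, Matrix.vecHead, Matrix.vecTail]
  calc Cm p σ 0 j = ∑ l, (∑ k, V' p 0 k * Qm p σ k l) * V p l j := by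
        simp [Cm, Matrix.mul_apply]
    _ = ∑ l, ((12 : ZMod p)⁻¹ * 3) * ((∑ k, Qm p σ k l) * V p l j) := by
        refine Finset.sum_congr rfl fun l _ => ?_
        simp only [hV'0]
        rw [← Finset.mul_sum, mul_assoc]
    _ = ((12 : ZMod p)⁻¹ * 3) * (sgn p σ * ∑ l, V p l j) := by
        rw [← Finset.mul_sum]
        congr 1
        simp only [Qm_colsum]
        rw [Finset.mul_sum]
    _ = sgn p σ * (if j = 0 then 1 else 0) := by
        rw [V_colsum h12]
        rcases eq_or_ne j 0 with h | h
        · subst h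
          simp only [if_pos rfl, if_true]
          field_simp
          ring
        · simp [h]

end withp

lemma VWm [Fact p.Prime] : V p * Wm p = (12 : ZMod p) • 1 := by
  ext i j
  fin_cases i <;> fin_cases j <;>
    simp [V, Wm, Matrix.mul_apply, Fin.sum_univ_four, Matrix.one_apply, Matrix.vecHead,
      Matrix.vecTail] <;> norm_num

lemma WmV [Fact p.Prime] : Wm p * V p = (12 : ZMod p) • 1 := by
  ext i j
  fin_cases i <;> fin_cases j <;>
    simp [V, Wm, Matrix.mul_apply, Fin.sum_univ_four, Matrix.one_apply, Matrix.vecHead,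
      Matrix.vecTail] <;> norm_num

lemma hVV' [Fact p.Prime] (h12 : (12 : ZMod p) ≠ 0) : V p * V' p = 1 := by
  rw [V', Matrix.mul_smul, VWm, smul_smul]
  rw [mul_comm, ZMod.mul_inv_of_unit 12 (Ne.isUnit h12), one_smul]

lemma hV'V [Fact p.Prime] (h12 : (12 : ZMod p) ≠ 0) : V' p * V p = 1 := by
  rw [V', Matrix.smul_mul, WmV, smul_smul]
  rw [mul_comm, ZMod.mul_inv_of_unit 12 (Ne.isUnit h12), one_smul]

section main
variable [Fact p.Prime] (h12 : (12 : ZMod p) ≠ 0)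
include h12

lemma Cm_mul (σ τ : Equiv.Perm (Fin 4)) : Cm p (σ * τ) = Cm p σ * Cm p τ := by
  rw [Cm, Cm, Cm, Qm_mul]
  have h1 := hVV' (p := p) h12
  calc V' p * (Qm p σ * Qm p τ) * V p
      = V' p * Qm p σ * (V p * V' p) * (Qm p τ * V p) := by
        rw [h1, mul_one]; simp only [mul_assoc]
    _ = V' p * Qm p σ * V p * (V' p * Qm p τ * V p) := by simp only [mul_assoc]

lemma mS_mul (σ τ : Equiv.Perm (Fin 4)) : mS p (σ * τ) = mS p σ * mS p τ := by
  ext i j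
  have hcol : Cm p σ i.succ 0 = 0 := by
    rw [Cm_col h12]
    simp [Fin.succ_ne_zero]
  show Cm p (σ * τ) i.succ j.succ = _
  rw [Cm_mul h12, Matrix.mul_apply, Matrix.mul_apply, Fin.sum_univ_succ, hcol]
  simp [mS, Matrix.submatrix_apply]

lemma mS_one : mS p 1 = 1 := by
  have : Cm p 1 = 1 := by rw [Cm, Qm_one, mul_one, hV'V h12]
  ext i j
  show Cm p 1 i.succ j.succ = _
  rw [this]
  simp [Matrix.one_apply, Fin.succ_inj]

lemma mS_inv (σ : Equiv.Perm (Fin 4)) : mS p σ * mS p σ⁻¹ = 1 := by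
  rw [← mS_mul h12, mul_inv_cancel, mS_one h12]

/-- the homomorphism `S₄ →* GL(3, ZMod p)` -/
noncomputable def Phi : Equiv.Perm (Fin 4) →* GL (Fin 3) (ZMod p) :=
  MonoidHom.mk' (fun σ => ⟨mS p σ, mS p σ⁻¹, mS_inv h12 σ, by
    have := mS_inv h12 σ⁻¹; rwa [inv_inv] at this⟩)
    (fun σ τ => Units.ext (mS_mul h12 σ τ))

lemma Phi_injective (hp5 : 5 ≤ p) : Function.Injective (Phi (p := p) h12) := by
  rw [injective_iff_map_eq_one]
  intro σ h
  have hm : mS p σ = 1 := congrArg Units.val h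
  set n : ℕ := (Finset.univ.filter fun i => σ i = i).card with hn
  have hnle : n ≤ 4 := le_trans (Finset.card_filter_le _ _) (by simp)
  have htr : Matrix.trace (Cm p σ) = sgn p σ + 3 := by
    have h1 : ∀ i : Fin 3, Cm p σ i.succ i.succ = 1 := by
      intro i
      have := congrFun (congrFun hm i) i
      simpa [mS, Matrix.one_apply] using this
    rw [Matrix.trace]
    rw [show ∑ i, (Cm p σ).diag i = Cm p σ 0 0 + ∑ i : Fin 3, Cm p σ i.succ i.succ from
      Fin.sum_univ_succ _]
    rw [Cm_row h12]
    simp [h1, Fin.sum_univ_three]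
  have htr2 : Matrix.trace (Cm p σ) = sgn p σ * (n : ZMod p) := by
    rw [Cm, Matrix.trace_mul_cycle, hVV' h12, one_mul]
    simp only [Matrix.trace, Matrix.diag, Qm, Pm, Matrix.smul_apply, Matrix.of_apply,
      smul_eq_mul]
    rw [← Finset.mul_sum, Finset.sum_boole, hn]
    try simp
  have key : sgn p σ * (n : ZMod p) = sgn p σ + 3 := by rw [← htr2, htr]
  rcases Int.units_eq_one_or (Equiv.Perm.sign σ) with hs | hs
  · have hsg : sgn p σ = 1 := by rw [sgn, hs]; simp
    rw [hsg, one_mul] at key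
    have hz : ((4 - n : ℕ) : ZMod p) = 0 := by
      push_cast [Nat.cast_sub hnle]
      rw [key]
      ring
    rw [ZMod.natCast_eq_zero_iff] at hz
    have h40 : 4 - n = 0 := by
      rcases Nat.eq_zero_or_pos (4 - n) with h | h
      · exact h
      · exact absurd (Nat.le_of_dvd h hz) (by omega)
    exact fix_four σ (by omega)
  · have hsg : sgn p σ = -1 := by rw [sgn, hs]; simp
    rw [hsg] at key
    have hz : ((n + 2 : ℕ) : ZMod p) = 0 := by
      push_cast
      linear_combination -key
    rw [ZMod.natCast_eq_zero_iff] at hz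
    have hple : p ≤ n + 2 := Nat.le_of_dvd (by omega) hz
    have hn3 : n = 3 ∨ n = 4 := by omega
    rcases hn3 with hn3 | hn4
    · exact absurd (hn ▸ hn3 : (Finset.univ.filter fun i => σ i = i).card = 3) (fix_ne_three σ)
    · have hσ : σ = 1 := fix_four σ (hn ▸ hn4)
      rw [hσ] at hs
      exact absurd hs (by decide)
end main


variable (p)

/-- block-diagonal form of `Cm aP` -/
def Wa : Matrix (Fin 4) (Fin 4) (ZMod p) :=
  !![-1, 0, 0, 0;
     0, 1, 1 - 1/2, (1 - 1/2) * (1 - -(1/3));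
     0, 0, -1, -1 + -(1/3);
     0, 0, 1 + 1/2, -1 + (1 + 1/2) * (1 - -(1/3))]

/-- block-diagonal form of `Cm bP` -/
def Wb : Matrix (Fin 4) (Fin 4) (ZMod p) :=
  !![1, 0, 0, 0;
     0, -1, -1 + 1/2, 0;
     0, 2, 1 - 2*(1/2), 0;
     0, 0, 1 + 1/2, 1]

lemma Qm_aP : Qm p aP = !![0,0,0,-1; -1,0,0,0; 0,-1,0,0; 0,0,-1,0] := by
  have hs : sgn p aP = -1 := by
    rw [sgn, show Equiv.Perm.sign aP = -1 from by decide]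
    simp
  ext i j
  fin_cases i <;> fin_cases j <;>
    simp [Qm, Pm, hs, show aP 0 = 1 from by decide, show aP 1 = 2 from by decide,
      show aP 2 = 3 from by decide, show aP 3 = 0 from by decide,
      Matrix.vecHead, Matrix.vecTail]

lemma Qm_bP : Qm p bP = !![1,0,0,0; 0,0,1,0; 0,0,0,1; 0,1,0,0] := by
  have hs : sgn p bP = 1 := by
    rw [sgn, show Equiv.Perm.sign bP = 1 from by decide]
    simp
  ext i j
  fin_cases i <;> fin_cases j <;>
    simp [Qm, Pm, hs, show bP 0 = 0 from by decide, show bP 1 = 3 from by decide,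
      show bP 2 = 1 from by decide, show bP 3 = 2 from by decide,
      Matrix.vecHead, Matrix.vecTail]

lemma QVa (h2 : (2 : ZMod p) ≠ 0) (h3 : (3 : ZMod p) ≠ 0) : Qm p aP * V p = V p * Wa p := by
  rw [Qm_aP]
  ext i j
  fin_cases i <;> fin_cases j <;>
    simp only [V, Wa, Matrix.mul_apply, Fin.sum_univ_four] <;>
    norm_num [Matrix.vecHead, Matrix.vecTail, Matrix.cons_val_two, Matrix.cons_val_three] <;>
    field_simp <;> ring

lemma QVb (h2 : (2 : ZMod p) ≠ 0) (h3 : (3 : ZMod p) ≠ 0) : Qm p bP * V p = V p * Wb p := by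
  rw [Qm_bP]
  ext i j
  fin_cases i <;> fin_cases j <;>
    simp only [V, Wb, Matrix.mul_apply, Fin.sum_univ_four] <;>
    norm_num [Matrix.vecHead, Matrix.vecTail, Matrix.cons_val_two, Matrix.cons_val_three] <;>
    field_simp <;> ring

lemma mS_aP (h2 : (2 : ZMod p) ≠ 0) (h3 : (3 : ZMod p) ≠ 0) (h12 : (12 : ZMod p) ≠ 0) : mS p aP = rhoV (1/2 : ZMod p) (-(1/3)) := by
  have hC : Cm p aP = Wa p := by
    rw [Cm, mul_assoc, QVa p h2 h3, ← mul_assoc, hV'V h12, one_mul]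
  rw [mS, hC]
  ext i j
  fin_cases i <;> fin_cases j <;>
    simp [Wa, rhoV, Matrix.submatrix_apply, Matrix.vecHead, Matrix.vecTail]

lemma mS_bP (h2 : (2 : ZMod p) ≠ 0) (h3 : (3 : ZMod p) ≠ 0) (h12 : (12 : ZMod p) ≠ 0) : mS p bP = rhoF (1/2 : ZMod p) (-(1/3)) := by
  have hC : Cm p bP = Wb p := by
    rw [Cm, mul_assoc, QVb p h2 h3, ← mul_assoc, hV'V h12, one_mul]
  rw [mS, hC]
  ext i j
  fin_cases i <;> fin_cases j <;>
    simp [Wb, rhoF, Matrix.submatrix_apply, Matrix.vecHead, Matrix.vecTail]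

lemma gen_perm : Subgroup.closure ({aP, bP} : Set (Equiv.Perm (Fin 4))) = ⊤ := by
  have h1 : aP.IsCycle := by
    refine ⟨0, by decide, fun y hy => ?_⟩
    fin_cases y
    · exact ⟨0, by decide⟩
    · exact ⟨1, by norm_num; decide⟩
    · exact ⟨2, by norm_num; decide⟩
    · exact ⟨3, by norm_num; decide⟩
  have h2 : aP.support = Finset.univ := by decide
  have h3 := Equiv.Perm.closure_cycle_adjacent_swap h1 h2 0
  have hsw : Equiv.swap (0 : Fin 4) (aP 0) = aP * bP := by decide
  rw [eq_top_iff, ← h3]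
  apply (Subgroup.closure_le _).mpr
  intro x hx
  rcases hx with h | h
  · subst h
    exact Subgroup.subset_closure (Set.mem_insert _ _)
  · rw [Set.mem_singleton_iff] at h
    subst h
    rw [hsw]
    exact Subgroup.mul_mem _
      (Subgroup.subset_closure (Set.mem_insert _ _))
      (Subgroup.subset_closure (Set.mem_insert_of_mem _ rfl))

end OctaAux

/-- The octahedron (`cos θ = 1/2`, `cos γ = −1/3`) specialized to `𝔽_p` for `p ≠ 2, 3`
still has automorphism group `S₄`. -/
theorem octahedron_mod_p (p : ℕ) [Fact p.Prime] (hp2 : p ≠ 2) (hp3 : p ≠ 3)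
    (A B : GL (Fin 3) (ZMod p))
    (hA : (A : Matrix (Fin 3) (Fin 3) (ZMod p)) = rhoV (1 / 2) (-(1 / 3)))
    (hB : (B : Matrix (Fin 3) (Fin 3) (ZMod p)) = rhoF (1 / 2) (-(1 / 3))) :
    Nonempty (Subgroup.closure {A, B} ≃* Equiv.Perm (Fin 4)) := by
  have hp := (Fact.out : p.Prime)
  have h2' : (2 : ZMod p) ≠ 0 := by
    intro h
    have h0 : ((2 : ℕ) : ZMod p) = 0 := by exact_mod_cast h
    rw [ZMod.natCast_eq_zero_iff] at h0
    exact hp2 ((Nat.prime_dvd_prime_iff_eq hp Nat.prime_two).mp h0)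
  have h3' : (3 : ZMod p) ≠ 0 := by
    intro h
    have h0 : ((3 : ℕ) : ZMod p) = 0 := by exact_mod_cast h
    rw [ZMod.natCast_eq_zero_iff] at h0
    exact hp3 ((Nat.prime_dvd_prime_iff_eq hp Nat.prime_three).mp h0)
  have h12 : (12 : ZMod p) ≠ 0 := by
    have h : (12 : ZMod p) = 2 * 2 * 3 := by norm_num
    rw [h]
    exact mul_ne_zero (mul_ne_zero h2' h2') h3'
  have hp5 : 5 ≤ p := by
    have h2le : 2 ≤ p := hp.two_le
    by_contra h
    push_neg at h
    interval_cases p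
    · exact hp2 rfl
    · exact hp3 rfl
    · norm_num at hp
  have hPhiA : OctaAux.Phi h12 OctaAux.aP = A := by
    apply Units.ext
    show OctaAux.mS p OctaAux.aP = _
    rw [hA, OctaAux.mS_aP p h2' h3' h12]
  have hPhiB : OctaAux.Phi h12 OctaAux.bP = B := by
    apply Units.ext
    show OctaAux.mS p OctaAux.bP = _
    rw [hB, OctaAux.mS_bP p h2' h3' h12]
  have hinj : Function.Injective (OctaAux.Phi (p := p) h12) :=
    OctaAux.Phi_injective h12 hp5
  have hrange : (OctaAux.Phi (p := p) h12).range = Subgroup.closure {A, B} := by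
    rw [MonoidHom.range_eq_map, ← OctaAux.gen_perm, MonoidHom.map_closure]
    congr 1
    rw [Set.image_insert_eq, Set.image_singleton, hPhiA, hPhiB]
  exact ⟨(MulEquiv.subgroupCongr hrange.symm).trans (MonoidHom.ofInjective hinj).symm⟩
end

section
/- Let K be a field whose characteristic is none of 2, 3, 5, and let s ∈ K satisfy s² = 5. In GL(3, K), the subgroup generated by the matrices ρ_v(x, y) and ρ_f(x, y) with x = 1/2 and y = −s/3 (the icosahedron specialized to K; both matrices are invertible) is isomorphic to the alternating group alternatingGroup (Fin 5). -/
/-!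
A₅ permutes the twenty face centres of the icosahedron exactly as it permutes the ordered pairs
of distinct points of `Fin 5`. Over `ℤ[√5]` one checks that `ρ_v` and `ρ_f` move the face centres
as the 5-cycle `(0 1 2 3 4)` and the 3-cycle `(1 4 2)` move the pairs. So, writing `v x` for the
face centre labelled `x`, the pairs `(g, M)` with `M (v x) = v (g • x)` form a subgroup of
`A₅ × GL₃(K)`; it is the graph of a homomorphism `A₅ → GL₃(K)` because the face centres span
`K³` and the two cycles generate `A₅` (the orders 5, 3 of the cycles and 2 of their product leave
only subgroups of index at most 2). Simplicity of `A₅` makes this homomorphism injective, and its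
image is generated by `ρ_v` and `ρ_f`.
-/

open Matrix

theorem Subgroup.eq_top_of_card_dvd_two_mul_card {G : Type*} [Group G] [IsSimpleGroup G]
    [Finite G] (H : Subgroup G) (hH : Nat.card G ∣ 2 * Nat.card H) (hG : Nat.card G ≠ 2) :
    H = ⊤ := by
  have hcard := H.index_mul_card
  have hidx : H.index ∣ 2 := by
    rw [← hcard] at hH
    exact Nat.dvd_of_mul_dvd_mul_right Nat.card_pos hH
  rcases (Nat.dvd_prime Nat.prime_two).mp hidx with h1 | h2
  · exact index_eq_one.mp h1
  · refine (normal_of_index_eq_two h2).eq_bot_or_eq_top.resolve_left fun hbot => hG ?_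
    rw [← hcard, h2, hbot, card_bot]

section GraphHom

variable {G H : Type*} [Group G] [Group H] (Γ : Subgroup (G × H))
  (hfun : ∀ h, ((1 : G), h) ∈ Γ → h = 1) (hdom : Γ.map (MonoidHom.fst G H) = ⊤)

noncomputable def Subgroup.fstEquivOfGraph : Γ ≃* G :=
  MulEquiv.ofBijective ((MonoidHom.fst G H).comp Γ.subtype)
    ⟨(injective_iff_map_eq_one _).mpr fun p hp => by
        obtain ⟨⟨g, h⟩, hgh⟩ := p
        obtain rfl : g = 1 := hp
        simp [hfun h hgh],
      fun g => by
        obtain ⟨p, hp, rfl⟩ := Subgroup.mem_map.mp (hdom ▸ Subgroup.mem_top g)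
        exact ⟨⟨p, hp⟩, rfl⟩⟩

noncomputable def Subgroup.graphHom : G →* H :=
  (MonoidHom.snd G H).comp <| Γ.subtype.comp (Γ.fstEquivOfGraph hfun hdom).symm.toMonoidHom

theorem Subgroup.graphHom_eq_of_mem {g : G} {h : H} (hgh : (g, h) ∈ Γ) :
    Γ.graphHom hfun hdom g = h := by
  have : (Γ.fstEquivOfGraph hfun hdom).symm g = ⟨(g, h), hgh⟩ :=
    (MulEquiv.symm_apply_eq _).mpr rfl
  simp [graphHom, this]

end GraphHom

theorem Subgroup.nonempty_closure_pair_mulEquiv_of_graph {G H : Type*} [Group G] [Group H]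
    [IsSimpleGroup G] (Γ : Subgroup (G × H)) (hfun : ∀ h, ((1 : G), h) ∈ Γ → h = 1)
    {a b : G} {A B : H} (hgen : closure {a, b} = ⊤) (ha : (a, A) ∈ Γ) (hb : (b, B) ∈ Γ)
    (hA : A ≠ 1) : Nonempty (closure {A, B} ≃* G) := by
  have hdom : Γ.map (MonoidHom.fst G H) = ⊤ := by
    rw [← top_le_iff, ← hgen, closure_le]
    rintro g (rfl | rfl)
    exacts [⟨_, ha, rfl⟩, ⟨_, hb, rfl⟩]
  set ψ := Γ.graphHom hfun hdom
  have hψa : ψ a = A := Γ.graphHom_eq_of_mem hfun hdom ha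
  have hψb : ψ b = B := Γ.graphHom_eq_of_mem hfun hdom hb
  have hinj : Function.Injective ψ := by
    refine (MonoidHom.ker_eq_bot_iff ψ).mp <| ψ.normal_ker.eq_bot_or_eq_top.resolve_right ?_
    intro htop
    exact hA (hψa ▸ (ψ.mem_ker.mp (htop ▸ mem_top a)))
  have hrange : ψ.range = closure {A, B} := by
    rw [ψ.range_eq_map, ← hgen, ψ.map_closure, Set.image_pair, hψa, hψb]
  exact ⟨(MulEquiv.subgroupCongr hrange.symm).trans (MonoidHom.ofInjective hinj).symm⟩

section EquivariantPairs

variable {G X n R : Type*} [Group G] [MulAction G X] [Fintype n] [DecidableEq n] [CommRing R]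

def Matrix.equivariantPairs (v : X → n → R) : Subgroup (G × GL n R) where
  carrier := {p | ∀ x, (p.2 : Matrix n n R) *ᵥ v x = v (p.1 • x)}
  mul_mem' {p q} hp hq x := by
    simp only [Set.mem_ofPred_eq, Prod.fst_mul, Prod.snd_mul, Units.val_mul, mul_smul] at *
    rw [← mulVec_mulVec, hq, hp]
  one_mem' x := by simp
  inv_mem' {p} hp x := by
    calc ((p.2⁻¹ : GL n R) : Matrix n n R) *ᵥ v x
        = ((p.2⁻¹ : GL n R) : Matrix n n R) *ᵥ ((p.2 : Matrix n n R) *ᵥ v (p.1⁻¹ • x)) := by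
          rw [hp, smul_inv_smul]
      _ = v (p.1⁻¹ • x) := by rw [mulVec_mulVec, Units.inv_mul, one_mulVec]

theorem Matrix.eq_one_of_forall_mulVec_eq (v : X → n → R) (xs : n → X)
    (hdet : IsUnit (of fun i j => v (xs j) i).det) {M : Matrix n n R}
    (hM : ∀ x, M *ᵥ v x = v x) : M = 1 := by
  refine ((Matrix.isUnit_iff_isUnit_det _).mpr hdet).mul_eq_right.mp ?_
  ext i j
  exact congrFun (hM (xs j)) i

end EquivariantPairs

theorem RingHom.mulVec_comp_of_mulVec_eq_smul {n R K : Type*} [Fintype n] [CommRing R] [Field K]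
    (f : R →+* K) {M : Matrix n n R} {w w' : n → R} {c : R} (h : M *ᵥ w = c • w')
    (hc : f c ≠ 0) : ((f c)⁻¹ • M.map f) *ᵥ (f ∘ w) = f ∘ w' := by
  ext i
  rw [smul_mulVec, Pi.smul_apply, ← f.map_mulVec, h]
  simp [hc]

namespace Icosahedron

def vertexRot : alternatingGroup (Fin 5) :=
  ⟨finRotate 5, Equiv.Perm.mem_alternatingGroup.mpr (by decide)⟩

def faceRot : alternatingGroup (Fin 5) :=
  ⟨c[1, 4, 2], Equiv.Perm.mem_alternatingGroup.mpr (by decide)⟩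

theorem closure_vertexRot_faceRot : Subgroup.closure {vertexRot, faceRot} = ⊤ := by
  have : IsSimpleGroup (alternatingGroup (Fin 5)) := alternatingGroup.isSimpleGroup (by simp)
  have : Fact (Nat.Prime 5) := ⟨by norm_num⟩
  set H := Subgroup.closure {vertexRot, faceRot}
  have hv : vertexRot ∈ H := Subgroup.subset_closure (by simp)
  have hf : faceRot ∈ H := Subgroup.subset_closure (by simp)
  have hov : orderOf vertexRot = 5 := orderOf_eq_prime (by decide) (by decide)
  have hof : orderOf faceRot = 3 := orderOf_eq_prime (by decide) (by decide)
  have hovf : orderOf (vertexRot * faceRot) = 2 := orderOf_eq_prime (by decide) (by decide)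
  have h5 := hov ▸ H.orderOf_dvd_natCard hv
  have h3 := hof ▸ H.orderOf_dvd_natCard hf
  have h2 := hovf ▸ H.orderOf_dvd_natCard (mul_mem hv hf)
  have hcard : Nat.card (alternatingGroup (Fin 5)) = 60 := by
    rw [nat_card_alternatingGroup, Nat.card_fin]; rfl
  refine H.eq_top_of_card_dvd_two_mul_card ?_ (by rw [hcard]; norm_num)
  rw [hcard]
  omega

/-- Six times the face centres, in the coordinates of `rhoV` and `rhoF`. The face labelled
`(i, j)` is the one whose stabiliser consists of the 3-cycles fixing `i` and `j`, and `(j, i)`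
labels the opposite face; the diagonal entries are junk. -/
def faceCenter₀ (x : Fin 5 × Fin 5) : Fin 3 → ℤ√5 :=
  ![![0, ![⟨3, 1⟩, ⟨-8, -4⟩, ⟨3, 3⟩], ![⟨-4, -2⟩, ⟨2, 2⟩, 0], ![0, 0, 6],
      ![⟨1, 1⟩, ⟨6, 2⟩, ⟨-9, -3⟩]],
    ![![⟨-3, -1⟩, ⟨8, 4⟩, ⟨-3, -3⟩], 0, ![⟨3, 1⟩, 0, ⟨-3, -3⟩], ![⟨-3, -1⟩, ⟨-2, -2⟩, ⟨3, 3⟩],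
      ![⟨3, 1⟩, ⟨-6, -2⟩, ⟨3, 3⟩]],
    ![![⟨4, 2⟩, ⟨-2, -2⟩, 0], ![⟨-3, -1⟩, 0, ⟨3, 3⟩], 0, ![⟨-1, -1⟩, ⟨8, 4⟩, ⟨-9, -3⟩],
      ![0, ⟨-6, -2⟩, 6]],
    ![![0, 0, -6], ![⟨3, 1⟩, ⟨2, 2⟩, ⟨-3, -3⟩], ![⟨1, 1⟩, ⟨-8, -4⟩, ⟨9, 3⟩], 0,
      ![⟨-4, -2⟩, ⟨6, 2⟩, 0]],
    ![![⟨-1, -1⟩, ⟨-6, -2⟩, ⟨9, 3⟩], ![⟨-3, -1⟩, ⟨6, 2⟩, ⟨-3, -3⟩], ![0, ⟨6, 2⟩, -6],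
      ![⟨4, 2⟩, ⟨-6, -2⟩, 0], 0]]
    x.1 x.2

def rhoV₀ : Matrix (Fin 3) (Fin 3) (ℤ√5) := !![6, 3, ⟨3, 1⟩; 0, -6, ⟨-6, -2⟩; 0, 9, ⟨3, 3⟩]

def rhoF₀ : Matrix (Fin 3) (Fin 3) (ℤ√5) := !![-6, -3, 0; 12, 0, 0; 0, 9, 6]

theorem rhoV₀_mulVec_faceCenter₀ (x : Fin 5 × Fin 5) :
    rhoV₀ *ᵥ faceCenter₀ x = (6 : ℤ√5) • faceCenter₀ (vertexRot • x) := by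
  revert x; decide

theorem rhoF₀_mulVec_faceCenter₀ (x : Fin 5 × Fin 5) :
    rhoF₀ *ᵥ faceCenter₀ x = (6 : ℤ√5) • faceCenter₀ (faceRot • x) := by
  revert x; decide

theorem det_faceCenter₀ :
    (of fun i j => faceCenter₀ (![(0, 1), (1, 2), (2, 3)] j) i).det = ⟨-96, -48⟩ := by
  decide

variable {K : Type*} [Field K] (s : K) (hs : s ^ 2 = 5)

def sqrtFiveHom : ℤ√5 →+* K := Zsqrtd.lift ⟨s, by rw [← sq, hs]; norm_num⟩

def faceCenter (x : Fin 5 × Fin 5) : Fin 3 → K := sqrtFiveHom s hs ∘ faceCenter₀ x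

variable {s} (h2 : (2 : K) ≠ 0) (h3 : (3 : K) ≠ 0)
include h2 h3

theorem six_ne_zero : (6 : K) ≠ 0 := by
  have : (6 : K) = 2 * 3 := by norm_num
  rw [this]; exact mul_ne_zero h2 h3

theorem rhoV_eq_map_rhoV₀ :
    rhoV (1 / 2 : K) (-s / 3) = (6 : K)⁻¹ • rhoV₀.map (sqrtFiveHom s hs) := by
  have := six_ne_zero h2 h3
  ext i j
  fin_cases i <;> fin_cases j <;>
    simp [rhoV, rhoV₀, sqrtFiveHom, Zsqrtd.lift_apply_apply] <;> field_simp <;> ring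

theorem rhoF_eq_map_rhoF₀ :
    rhoF (1 / 2 : K) (-s / 3) = (6 : K)⁻¹ • rhoF₀.map (sqrtFiveHom s hs) := by
  have := six_ne_zero h2 h3
  ext i j
  fin_cases i <;> fin_cases j <;>
    simp [rhoF, rhoF₀, sqrtFiveHom, Zsqrtd.lift_apply_apply] <;> field_simp <;> ring

theorem mem_equivariantPairs_of_map {g : alternatingGroup (Fin 5)}
    {M₀ : Matrix (Fin 3) (Fin 3) (ℤ√5)}
    (hM₀ : ∀ x, M₀ *ᵥ faceCenter₀ x = (6 : ℤ√5) • faceCenter₀ (g • x)) {M : GL (Fin 3) K}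
    (hM : (M : Matrix (Fin 3) (Fin 3) K) = (6 : K)⁻¹ • M₀.map (sqrtFiveHom s hs)) :
    (g, M) ∈ equivariantPairs (faceCenter s hs) := fun x => by
  rw [hM, ← map_ofNat (sqrtFiveHom s hs) 6]
  exact (sqrtFiveHom s hs).mulVec_comp_of_mulVec_eq_smul (hM₀ x)
    (by rw [map_ofNat]; exact six_ne_zero h2 h3)

theorem eq_one_of_forall_mulVec_faceCenter {M : Matrix (Fin 3) (Fin 3) K}
    (hM : ∀ x, M *ᵥ faceCenter s hs x = faceCenter s hs x) : M = 1 := by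
  refine eq_one_of_forall_mulVec_eq _ ![(0, 1), (1, 2), (2, 3)] (isUnit_iff_ne_zero.mpr ?_) hM
  have hdet : (of fun i j => faceCenter s hs (![(0, 1), (1, 2), (2, 3)] j) i).det =
      sqrtFiveHom s hs ⟨-96, -48⟩ := by
    rw [← det_faceCenter₀, RingHom.map_det]; rfl
  rw [hdet, sqrtFiveHom, Zsqrtd.lift_apply_apply]
  push_cast
  intro h
  refine mul_ne_zero (six_ne_zero h2 h3) (pow_ne_zero 3 h2) ?_
  linear_combination (2 - s) * h - 48 * hs

end Icosahedron

theorem icosahedron_specialization_general (K : Type*) [Field K]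
    (h2 : ringChar K ≠ 2) (h3 : ringChar K ≠ 3)
    (s : K) (hs : s ^ 2 = 5)
    (A B : GL (Fin 3) K)
    (hA : (A : Matrix (Fin 3) (Fin 3) K) = rhoV (1 / 2) (-s / 3))
    (hB : (B : Matrix (Fin 3) (Fin 3) K) = rhoF (1 / 2) (-s / 3)) :
    Nonempty (Subgroup.closure {A, B} ≃* alternatingGroup (Fin 5)) := by
  have two : (2 : K) ≠ 0 := Ring.two_ne_zero h2
  have three : (3 : K) ≠ 0 := by
    exact_mod_cast CharP.cast_ne_zero_of_ne_of_prime K Nat.prime_three h3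
  have hA_ne_one : A ≠ 1 := fun h => h2 <| neg_one_eq_one_iff.mp <| by
    simpa [h, rhoV] using (congrFun (congrFun hA 1) 1).symm
  open Icosahedron in
  exact Subgroup.nonempty_closure_pair_mulEquiv_of_graph (equivariantPairs (faceCenter s hs))
    (fun M hM => Units.ext <| eq_one_of_forall_mulVec_faceCenter hs two three fun x => by
      simpa using hM x)
    closure_vertexRot_faceRot
    (mem_equivariantPairs_of_map hs two three rhoV₀_mulVec_faceCenter₀
      (hA.trans (rhoV_eq_map_rhoV₀ hs two three)))
    (mem_equivariantPairs_of_map hs two three rhoF₀_mulVec_faceCenter₀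
      (hB.trans (rhoF_eq_map_rhoF₀ hs two three)))
    hA_ne_one

/-- The icosahedron (`cos θ = 1/2`, `cos γ = −√5/3`) specialized to any field `K` of
characteristic different from 2, 3 and 5 (with `s` a square root of 5 in `K`) still has
automorphism group `A₅`. -/
theorem icosahedron_specialization (K : Type*) [Field K]
    (h2 : ringChar K ≠ 2) (h3 : ringChar K ≠ 3) (h5 : ringChar K ≠ 5)
    (s : K) (hs : s ^ 2 = 5)
    (A B : GL (Fin 3) K)
    (hA : (A : Matrix (Fin 3) (Fin 3) K) = rhoV (1 / 2) (-s / 3))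
    (hB : (B : Matrix (Fin 3) (Fin 3) K) = rhoF (1 / 2) (-s / 3)) :
    Nonempty (Subgroup.closure {A, B} ≃* alternatingGroup (Fin 5)) :=
  icosahedron_specialization_general K h2 h3 s hs A B hA hB
end

section
/- Let n ≥ 3 be a natural number. The subgroup of GL(3, ZMod n) generated by the reductions modulo n of the integer matrices ρ_v(0, −1) and ρ_f(0, −1) is finite of cardinality n² if n is even, and of cardinality 4n² if n is odd. -/
open Matrix

def Mk (k : Fin 4) (c d : ZMod n) : Matrix (Fin 3) (Fin 3) (ZMod n) :=
  match k with
  | ⟨0, _⟩ => !![1+c, c, c; d, 1+d, d; -c-d, -c-d, 1-c-d]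
  | ⟨1, _⟩ => !![-1+c, -1+c, c; 2+d, 1+d, d; -c-d, 1-c-d, 1-c-d]
  | ⟨2, _⟩ => !![-1+c, c, c; d, -1+d, d; 2-c-d, 2-c-d, 1-c-d]
  | ⟨3, _⟩ => !![1+c, 1+c, c; -2+d, -1+d, d; 2-c-d, 1-c-d, 1-c-d]

def rc (k : Fin 4) (c d : ZMod n) : ZMod n :=
  match k with
  | ⟨0, _⟩ => c | ⟨1, _⟩ => -c-d | ⟨2, _⟩ => -c | ⟨3, _⟩ => c+d

def rd (k : Fin 4) (c d : ZMod n) : ZMod n :=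
  match k with
  | ⟨0, _⟩ => d | ⟨1, _⟩ => 2*c+d | ⟨2, _⟩ => -d | ⟨3, _⟩ => -2*c-d

theorem rc_zero (k : Fin 4) : rc (n := n) k 0 0 = 0 := by
  fin_cases k <;> simp [rc]

theorem rd_zero (k : Fin 4) : rd (n := n) k 0 0 = 0 := by
  fin_cases k <;> simp [rd]

theorem rc_two (k : Fin 4) (c d : ZMod n) : rc k (2*c) (2*d) = 2 * rc k c d := by
  fin_cases k <;> simp [rc] <;> ring

theorem rd_two (k : Fin 4) (c d : ZMod n) : rd k (2*c) (2*d) = 2 * rd k c d := by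
  fin_cases k <;> simp [rd] <;> ring

theorem rc_neg (k : Fin 4) (c d : ZMod n) : rc k (-c) (-d) = -(rc k c d) := by
  fin_cases k <;> simp [rc] <;> ring

theorem rd_neg (k : Fin 4) (c d : ZMod n) : rd k (-c) (-d) = -(rd k c d) := by
  fin_cases k <;> simp [rd] <;> ring

theorem Mk_one : Mk (n := n) 0 0 0 = 1 := by
  rw [show (1 : Matrix (Fin 3) (Fin 3) (ZMod n)) = !![1,0,0;0,1,0;0,0,1] from
    Matrix.one_fin_three]
  norm_num [Mk]

set_option maxHeartbeats 2000000 in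
theorem Mmul (k k' : Fin 4) (c d c' d' : ZMod n) :
    Mk k c d * Mk k' c' d' = Mk (k + k') (c + rc k c' d') (d + rd k c' d') := by
  fin_cases k <;> fin_cases k' <;>
    (ext i j; fin_cases i <;> fin_cases j <;>
      simp [Mk, rc, rd, Fin.add_def, Matrix.mul_apply, Fin.sum_univ_three] <;> ring)

theorem val_inv_eq {g : GL (Fin 3) (ZMod n)} {X : Matrix (Fin 3) (Fin 3) (ZMod n)}
    (h : X * (↑g : Matrix (Fin 3) (Fin 3) (ZMod n)) = 1) :
    (↑g⁻¹ : Matrix (Fin 3) (Fin 3) (ZMod n)) = X := by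
  calc (↑g⁻¹ : Matrix (Fin 3) (Fin 3) (ZMod n)) = X * ↑g * ↑g⁻¹ := by rw [h, one_mul]
  _ = X * (↑g * ↑g⁻¹) := by rw [mul_assoc]
  _ = X := by rw [Units.mul_inv, mul_one]

set_option maxHeartbeats 800000 in
theorem Mk_inj (h2 : (2:ZMod n) ≠ 0) {k k' : Fin 4} {c d c' d' : ZMod n}
    (h : Mk k c d = Mk k' c' d') : k = k' ∧ c = c' ∧ d = d' := by
  have e00 := congrFun (congrFun h 0) 0
  have e02 := congrFun (congrFun h 0) 2
  have e10 := congrFun (congrFun h 1) 0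
  have e12 := congrFun (congrFun h 1) 2
  fin_cases k <;> fin_cases k' <;> simp [Mk] at e00 e02 e10 e12 <;>
    first
    | exact ⟨rfl, by linear_combination e02, by linear_combination e12⟩
    | exact absurd (by first
        | linear_combination e00 - e02
        | linear_combination e02 - e00
        | linear_combination e10 - e12
        | linear_combination e12 - e10 : (2:ZMod n) = 0) h2

def SG (n : ℕ) : Subgroup (GL (Fin 3) (ZMod n)) where
  carrier := {g | ∃ k a b, (↑g : Matrix (Fin 3) (Fin 3) (ZMod n)) = Mk k (2*a) (2*b)}
  one_mem' := ⟨0, 0, 0, by norm_num [Mk_one]⟩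
  mul_mem' := by
    rintro g h ⟨k, a, b, hg⟩ ⟨k', a', b', hh⟩
    refine ⟨k + k', a + rc k a' b', b + rd k a' b', ?_⟩
    rw [Units.val_mul, hg, hh, Mmul, rc_two, rd_two, mul_add 2 a, mul_add 2 b]
  inv_mem' := by
    rintro g ⟨k, a, b, hg⟩
    refine ⟨-k, rc (-k) (-a) (-b), rd (-k) (-a) (-b), ?_⟩
    apply val_inv_eq
    rw [hg, show (2 * rc (-k) (-a) (-b)) = rc (-k) (-(2*a)) (-(2*b)) by
        rw [show (-(2*a)) = 2*(-a) by ring, show (-(2*b)) = 2*(-b) by ring, rc_two],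
      show (2 * rd (-k) (-a) (-b)) = rd (-k) (-(2*a)) (-(2*b)) by
        rw [show (-(2*a)) = 2*(-a) by ring, show (-(2*b)) = 2*(-b) by ring, rd_two],
      Mmul, rc_neg, rd_neg, neg_add_cancel, neg_add_cancel, neg_add_cancel, Mk_one]

open Fin.NatCast in
/-- Reducing the square-grid von Dyck group `G_{4,4}` modulo `n ≥ 3`: the subgroup of
`GL(3, ZMod n)` generated by the reductions of `ρ_v(0,−1)` and `ρ_f(0,−1)` is finite, of
order `n²` for even `n` (an `(n/2) × (n/2)` grid) and `4n²` for odd `n` (an `n × n` grid). -/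
theorem square_grid_mod_n_card (n : ℕ) (hn : 3 ≤ n)
    (A B : GL (Fin 3) (ZMod n))
    (hA : (A : Matrix (Fin 3) (Fin 3) (ZMod n)) = (rhoV 0 (-1) : Matrix (Fin 3) (Fin 3) ℤ).map
      (Int.cast : ℤ → ZMod n))
    (hB : (B : Matrix (Fin 3) (Fin 3) (ZMod n)) = (rhoF 0 (-1) : Matrix (Fin 3) (Fin 3) ℤ).map
      (Int.cast : ℤ → ZMod n)) :
    Finite (Subgroup.closure {A, B} : Subgroup (GL (Fin 3) (ZMod n))) ∧
      (Even n → Nat.card (Subgroup.closure {A, B} : Subgroup (GL (Fin 3) (ZMod n))) = n ^ 2) ∧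
      (Odd n → Nat.card (Subgroup.closure {A, B} : Subgroup (GL (Fin 3) (ZMod n))) = 4 * n ^ 2) := by
  haveI : NeZero n := ⟨by omega⟩
  have h2 : (2 : ZMod n) ≠ 0 := by
    intro h
    have h' : ((2 : ℕ) : ZMod n) = 0 := by exact_mod_cast h
    have hdvd := (ZMod.natCast_eq_zero_iff 2 n).mp h'
    have := Nat.le_of_dvd (by norm_num) hdvd
    omega
  have hA' : (↑A : Matrix (Fin 3) (Fin 3) (ZMod n)) = Mk 1 2 (-2) := by
    rw [hA]; ext i j; fin_cases i <;> fin_cases j <;>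
      simp [rhoV, Mk, Matrix.map_apply, Matrix.vecHead, Matrix.vecTail] <;> norm_num
  have hB' : (↑B : Matrix (Fin 3) (Fin 3) (ZMod n)) = Mk 1 0 0 := by
    rw [hB]; ext i j; fin_cases i <;> fin_cases j <;>
      simp [rhoF, Mk, Matrix.map_apply, Matrix.vecHead, Matrix.vecTail] <;> norm_num
  have hBinv : (↑(B⁻¹) : Matrix (Fin 3) (Fin 3) (ZMod n)) = Mk 3 0 0 := by
    apply val_inv_eq
    rw [hB', Mmul]
    simp [rc_zero, rd_zero, show ((3 : Fin 4) + 1) = 0 from by decide, Mk_one]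
  have hu : ((A * B⁻¹ : GL (Fin 3) (ZMod n)) : Matrix (Fin 3) (Fin 3) (ZMod n))
      = Mk 0 2 (-2) := by
    rw [Units.val_mul, hA', hBinv, Mmul]
    simp [rc_zero, rd_zero, show ((1 : Fin 4) + 3) = 0 from by decide]
  have hw : ((B * (A * B⁻¹) * B⁻¹ : GL (Fin 3) (ZMod n)) : Matrix (Fin 3) (Fin 3) (ZMod n))
      = Mk 0 0 2 := by
    rw [Units.val_mul, Units.val_mul, hB', hu, hBinv, Mmul, Mmul]
    norm_num [rc, rd, rc_zero, rd_zero, show ((1 : Fin 4) + 0) = 1 from by decide,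
      show ((1 : Fin 4) + 0 + 3) = 0 from by decide, show ((1 : Fin 4) + 3) = 0 from by decide,
      show ((4 : Fin 4)) = 0 from by decide]
    exact congrFun (congrFun (congrArg Mk (by decide : (4 : Fin 4) = 0)) 0) 2
  have upow : ∀ i : ℕ, (((A * B⁻¹) ^ i : GL (Fin 3) (ZMod n)) : Matrix (Fin 3) (Fin 3) (ZMod n))
      = Mk 0 (2 * (i : ZMod n)) (-(2 * (i : ZMod n))) := by
    intro i; induction i with
    | zero => norm_num [Mk_one]
    | succ i ih =>
      rw [pow_succ, Units.val_mul, ih, hu, Mmul, show ((0 : Fin 4) + 0) = 0 from by decide]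
      have e1 : 2 * (i : ZMod n) + rc 0 2 (-2) = 2 * ((i + 1 : ℕ) : ZMod n) := by
        simp [rc]; push_cast; ring
      have e2 : -(2 * (i : ZMod n)) + rd 0 2 (-2) = -(2 * ((i + 1 : ℕ) : ZMod n)) := by
        simp [rd]; push_cast; ring
      rw [e1, e2]
  have wpow : ∀ j : ℕ,
      (((B * (A * B⁻¹) * B⁻¹) ^ j : GL (Fin 3) (ZMod n)) : Matrix (Fin 3) (Fin 3) (ZMod n))
      = Mk 0 0 (2 * (j : ZMod n)) := by
    intro j; induction j with
    | zero => norm_num [Mk_one]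
    | succ j ih =>
      rw [pow_succ, Units.val_mul, ih, hw, Mmul, show ((0 : Fin 4) + 0) = 0 from by decide]
      have e1 : (0 : ZMod n) + rc 0 0 2 = 0 := by simp [rc]
      have e2 : 2 * (j : ZMod n) + rd 0 0 2 = 2 * ((j + 1 : ℕ) : ZMod n) := by
        simp [rd]; push_cast; ring
      rw [e1, e2]
  have Bpow : ∀ t : ℕ, ((B ^ t : GL (Fin 3) (ZMod n)) : Matrix (Fin 3) (Fin 3) (ZMod n))
      = Mk (t : Fin 4) 0 0 := by
    intro t; induction t with
    | zero => norm_num [Mk_one]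
    | succ t ih =>
      rw [pow_succ, Units.val_mul, ih, hB', Mmul]
      simp only [rc_zero, rd_zero, add_zero]
      congr 1
      push_cast
      ring
  set Φ : Fin 4 × ZMod n × ZMod n → GL (Fin 3) (ZMod n) :=
    fun p => (A * B⁻¹) ^ (p.2.1.val) * (B * (A * B⁻¹) * B⁻¹) ^ ((p.2.1 + p.2.2).val)
      * B ^ (p.1.val) with hΦ
  have Φval : ∀ p : Fin 4 × ZMod n × ZMod n,
      ((Φ p : GL (Fin 3) (ZMod n)) : Matrix (Fin 3) (Fin 3) (ZMod n))
        = Mk p.1 (2 * p.2.1) (2 * p.2.2) := by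
    rintro ⟨k, a, b⟩
    rw [hΦ]
    simp only [Units.val_mul]
    rw [upow, wpow, Bpow, Mmul, Mmul, Fin.cast_val_eq_self]
    have hc : ∀ x : ZMod n, ((x.val : ℕ) : ZMod n) = x := by
      intro x; rw [ZMod.natCast_val, ZMod.cast_id]
    rw [hc, hc]
    have hext : ∀ (k₁ k₂ : Fin 4) (c c' d d' : ZMod n), k₁ = k₂ → c = c' → d = d' →
        Mk k₁ c d = Mk k₂ c' d' := by rintro _ _ _ _ _ _ rfl rfl rfl; rfl
    refine hext _ _ _ _ _ _ ?_ ?_ ?_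
    · simp
    · simp [rc, rc_zero]
    · simp [rd, rd_zero]; ring
  have hAc : A ∈ Subgroup.closure ({A, B} : Set (GL (Fin 3) (ZMod n))) :=
    Subgroup.subset_closure (by simp)
  have hBc : B ∈ Subgroup.closure ({A, B} : Set (GL (Fin 3) (ZMod n))) :=
    Subgroup.subset_closure (by simp)
  have hΦc : ∀ p, Φ p ∈ Subgroup.closure ({A, B} : Set (GL (Fin 3) (ZMod n))) := by
    intro p
    rw [hΦ]
    exact mul_mem (mul_mem (pow_mem (mul_mem hAc (inv_mem hBc)) _)
      (pow_mem (mul_mem (mul_mem hBc (mul_mem hAc (inv_mem hBc))) (inv_mem hBc)) _))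
      (pow_mem hBc _)
  have hcar : ((Subgroup.closure ({A, B} : Set (GL (Fin 3) (ZMod n)))
      : Subgroup (GL (Fin 3) (ZMod n))) : Set (GL (Fin 3) (ZMod n))) = Set.range Φ := by
    apply Set.Subset.antisymm
    · intro g hg
      have hSG : g ∈ SG n := by
        refine (Subgroup.closure_le (SG n)).mpr ?_ hg
        intro x hx
        simp only [Set.mem_insert_iff, Set.mem_singleton_iff] at hx
        rcases hx with rfl | rfl
        · exact ⟨1, 1, -1, by rw [hA']; norm_num⟩
        · exact ⟨1, 0, 0, by rw [hB']; norm_num⟩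
      obtain ⟨k, a, b, hgv⟩ := hSG
      exact ⟨(k, a, b), Units.ext (by rw [Φval]; exact hgv.symm)⟩
    · rintro g ⟨p, rfl⟩
      exact hΦc p
  have hfin : Finite (Subgroup.closure ({A, B} : Set (GL (Fin 3) (ZMod n)))) := by
    have : Finite (Set.range Φ) := (Set.finite_range Φ).to_subtype
    exact Finite.of_equiv _ (Equiv.setCongr hcar).symm
  have hcard : Nat.card (Subgroup.closure ({A, B} : Set (GL (Fin 3) (ZMod n))))
      = Nat.card (Set.range Φ) := Nat.card_congr (Equiv.setCongr hcar)
  refine ⟨hfin, ?_, ?_⟩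
  · -- even
    intro he
    obtain ⟨m, hm⟩ := he
    subst hm
    haveI : NeZero m := ⟨by omega⟩
    set Ψ : Fin 4 × ZMod m × ZMod m → GL (Fin 3) (ZMod (m + m)) :=
      fun p => Φ (p.1, ((p.2.1.val : ℕ) : ZMod (m + m)), ((p.2.2.val : ℕ) : ZMod (m + m))) with hΨ
    have key : ∀ a : ZMod (m + m), 2 * ((((a.val : ZMod m)).val : ℕ) : ZMod (m + m)) = 2 * a := by
      intro a
      have hc : ((a.val : ℕ) : ZMod (m + m)) = a := by rw [ZMod.natCast_val, ZMod.cast_id]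
      calc 2 * ((((a.val : ZMod m)).val : ℕ) : ZMod (m + m))
          = (((2 * ((a.val : ZMod m)).val : ℕ)) : ZMod (m + m)) := by push_cast; ring
        _ = (((2 * a.val : ℕ)) : ZMod (m + m)) := by
            rw [ZMod.natCast_eq_natCast_iff']
            simp only [ZMod.val_natCast]
            have hsplit : 2 * a.val = 2 * (a.val % m) + (a.val / m) * (m + m) := by
              conv_lhs => rw [← Nat.mod_add_div a.val m]
              ring
            rw [hsplit, Nat.add_mul_mod_self_right]
        _ = 2 * a := by push_cast [hc]; ring
    have hrange : Set.range Ψ = Set.range Φ := by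
      apply Set.Subset.antisymm
      · rintro g ⟨p, rfl⟩; exact ⟨_, rfl⟩
      · rintro g ⟨⟨k, a, b⟩, rfl⟩
        refine ⟨(k, (a.val : ZMod m), (b.val : ZMod m)), ?_⟩
        apply Units.ext
        rw [hΨ]
        simp only []
        rw [Φval, Φval]
        simp only []
        rw [key a, key b]
    have hinj : Function.Injective Ψ := by
      rintro ⟨k, a, b⟩ ⟨k', a', b'⟩ hpq
      have hv := congrArg Units.val hpq
      rw [hΨ] at hv
      simp only [] at hv
      rw [Φval, Φval] at hv
      obtain ⟨hk, hcc, hdd⟩ := Mk_inj h2 hv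
      have hval : ∀ x x' : ZMod m,
          (2 * ((x.val : ℕ) : ZMod (m + m)) = 2 * ((x'.val : ℕ) : ZMod (m + m))) → x = x' := by
        intro x x' hxx
        have hcast : (((2 * x.val : ℕ)) : ZMod (m + m)) = (((2 * x'.val : ℕ)) : ZMod (m + m)) := by
          push_cast; linear_combination hxx
        have hmod := (ZMod.natCast_eq_natCast_iff' _ _ _).mp hcast
        have hx := x.val_lt
        have hx' := x'.val_lt
        rw [Nat.mod_eq_of_lt (by omega), Nat.mod_eq_of_lt (by omega)] at hmod
        exact ZMod.val_injective m (by omega)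
      exact Prod.ext hk (Prod.ext (hval _ _ hcc) (hval _ _ hdd))
    rw [hcard, ← hrange, Nat.card_range_of_injective hinj]
    rw [Nat.card_prod, Nat.card_prod, Nat.card_eq_fintype_card, Nat.card_zmod,
      Fintype.card_fin]
    ring
  · -- odd
    intro ho
    have hunit : IsUnit (2 : ZMod n) := by
      have : ((2 : ℕ) : ZMod n) = (2 : ZMod n) := by push_cast; ring
      rw [← this]
      refine (ZMod.isUnit_iff_coprime 2 n).mpr ?_
      refine (Nat.Prime.coprime_iff_not_dvd Nat.prime_two).mpr ?_
      intro hd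
      obtain ⟨r, hr⟩ := ho
      omega
    have hinj : Function.Injective Φ := by
      rintro ⟨k, a, b⟩ ⟨k', a', b'⟩ hpq
      have hv := congrArg Units.val hpq
      rw [Φval, Φval] at hv
      obtain ⟨hk, hcc, hdd⟩ := Mk_inj h2 hv
      exact Prod.ext hk (Prod.ext (hunit.mul_left_cancel hcc) (hunit.mul_left_cancel hdd))
    rw [hcard, Nat.card_range_of_injective hinj]
    rw [Nat.card_prod, Nat.card_prod, Nat.card_eq_fintype_card, Nat.card_zmod,
      Fintype.card_fin]
    ring
end
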